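/- Let κ be a kernel satisfying (κ₁) for order 2 and (κ₂). Then for every h ∈ V₊^w(ℝ₊) (nonnegative, with w·h log-uniformly continuous and bounded), the weighted uniform convergence holds: lim_{m→∞} sup_{z>0} w(z) |M_m^κ(h, z) − h(z)| = 0. -/

import Mathlib

/-!
In logarithmic coordinates `v = log z` the weighted hypothesis says that `h ∘ exp` grows at most
like `1 + v²` and that `h (exp v) / (1 + v²)` is uniformly continuous. Splitting into `|v - ℓ|`
small and large, this gives for each `ε > 0` a modulus
`|h (exp v) - h (exp ℓ)| ≤ (ε + C (v - ℓ)²) (1 + ℓ²)`. On the sampling interval `[j/m, (j+1)/m]` we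
have `(v - ℓ)² ≲ (1 + (j - m ℓ)²) / m²`, and the second absolute moment of the kernel turns the
quadratic part into `O(m⁻²)`. Finally the max-product mean `(⨆ F G) / (⨆ F)` deviates from `c` by
at most `sup |F| |G - c| / ζ`, because `⨆` is `1`-Lipschitz for the sup distance and `⨆ F ≥ ζ`.
-/

open Real MeasureTheory

/-- Max-product Kantorovich exponential sampling operator over all integers. -/
noncomputable def MopZ (κ : ℝ → ℝ) (m : ℝ) (h : ℝ → ℝ) (z : ℝ) : ℝ :=
  sSup (Set.range fun j : ℤ => κ (Real.exp (-(j : ℝ)) * z ^ m) *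
      (m * ∫ v in (j : ℝ)/m..((j : ℝ) + 1)/m, h (Real.exp v))) /
  sSup (Set.range fun j : ℤ => κ (Real.exp (-(j : ℝ)) * z ^ m))

/-- Log-uniform continuity on the positive reals. -/
def LogUC (g : ℝ → ℝ) : Prop :=
  ∀ ε : ℝ, 0 < ε → ∃ δ : ℝ, 0 < δ ∧ ∀ z₁ : ℝ, 0 < z₁ → ∀ z₂ : ℝ, 0 < z₂ →
    |Real.log z₁ - Real.log z₂| ≤ δ → |g z₁ - g z₂| < ε

/-- Membership in the weighted space `V^w(ℝ₊)`, `w z = 1/(1+(log z)^2)`. -/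
def MemVw (h : ℝ → ℝ) : Prop :=
  LogUC (fun z => h z / (1 + (Real.log z) ^ 2)) ∧
    ∃ K : ℝ, ∀ z : ℝ, 0 < z → |h z| / (1 + (Real.log z) ^ 2) ≤ K

/-- Weighted logarithmic modulus of continuity. -/
noncomputable def Upsilon (h : ℝ → ℝ) (ρ : ℝ) : ℝ :=
  sSup {y : ℝ | ∃ u z : ℝ, 0 < u ∧ 0 < z ∧ |Real.log u| ≤ ρ ∧
    y = |h (u * z) - h z| / ((1 + (Real.log z) ^ 2) * (1 + (Real.log u) ^ 2))}

lemma abs_ciSup_sub_ciSup_le {ι : Type*} [Nonempty ι] {f g : ι → ℝ} {C : ℝ}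
    (hg : BddAbove (Set.range g)) (hfg : ∀ i, |f i - g i| ≤ C) :
    |(⨆ i, f i) - ⨆ i, g i| ≤ C := by
  have hf : BddAbove (Set.range f) := by
    refine ⟨(⨆ i, g i) + C, ?_⟩
    rintro _ ⟨i, rfl⟩
    linarith [le_ciSup hg i, (abs_le.1 (hfg i)).2]
  rw [abs_sub_le_iff, sub_le_iff_le_add, sub_le_iff_le_add]
  constructor
  · refine ciSup_le fun i => ?_
    linarith [le_ciSup hg i, (abs_le.1 (hfg i)).2]
  · refine ciSup_le fun i => ?_
    linarith [le_ciSup hf i, (abs_le.1 (hfg i)).1]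

lemma abs_iSup_mul_div_iSup_sub_le {ι : Type*} {F G : ι → ℝ} {c C ζ : ℝ}
    (hF : BddAbove (Set.range F)) (hζ : 0 < ζ) (hζF : ∃ i, ζ ≤ F i) (hc : 0 ≤ c)
    (hFG : ∀ i, |F i| * |G i - c| ≤ C) :
    |(⨆ i, F i * G i) / (⨆ i, F i) - c| ≤ C / ζ := by
  obtain ⟨i₀, hi₀⟩ := hζF
  have : Nonempty ι := ⟨i₀⟩
  have hζD : ζ ≤ ⨆ i, F i := le_ciSup_of_le hF i₀ hi₀
  have hD : 0 < ⨆ i, F i := hζ.trans_le hζD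
  have hC : 0 ≤ C := (by positivity : 0 ≤ |F i₀| * |G i₀ - c|).trans (hFG i₀)
  have hFc : BddAbove (Set.range fun i => F i * c) := by
    obtain ⟨b, hb⟩ := hF
    refine ⟨b * c, ?_⟩
    rintro _ ⟨i, rfl⟩
    exact mul_le_mul_of_nonneg_right (hb ⟨i, rfl⟩) hc
  have hsup : |(⨆ i, F i * G i) - (⨆ i, F i) * c| ≤ C := by
    rw [Real.iSup_mul_of_nonneg hc]
    refine abs_ciSup_sub_ciSup_le hFc fun i => ?_
    rw [← mul_sub, abs_mul]
    exact hFG i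
  rw [div_sub' hD.ne', abs_div, abs_of_pos hD]
  calc |(⨆ i, F i * G i) - (⨆ i, F i) * c| / ⨆ i, F i ≤ C / ⨆ i, F i := by gcongr
    _ ≤ C / ζ := by gcongr

lemma abs_inv_mul_integral_sub_le {f : ℝ → ℝ} {a b c S : ℝ} (hab : a < b)
    (hf : IntervalIntegrable f volume a b) (hS : ∀ v ∈ Set.Ioc a b, |f v - c| ≤ S) :
    |(b - a)⁻¹ * (∫ v in a..b, f v) - c| ≤ S := by
  have hba : 0 < b - a := sub_pos.2 hab
  have hint : |∫ v in a..b, (f v - c)| ≤ S * (b - a) := by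
    have := intervalIntegral.norm_integral_le_of_norm_le_const (a := a) (b := b)
      (f := fun v => f v - c) (C := S) (by rwa [Set.uIoc_of_le hab.le])
    rwa [Real.norm_eq_abs, abs_of_pos hba] at this
  rw [intervalIntegral.integral_sub hf intervalIntegrable_const,
    intervalIntegral.integral_const, smul_eq_mul] at hint
  rw [show (b - a)⁻¹ * (∫ v in a..b, f v) - c = (b - a)⁻¹ * ((∫ v in a..b, f v) - (b - a) * c) by
    field_simp, abs_mul, abs_of_pos (inv_pos.2 hba)]
  calc (b - a)⁻¹ * |(∫ v in a..b, f v) - (b - a) * c| ≤ (b - a)⁻¹ * (S * (b - a)) := by gcongr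
    _ = S := by field_simp

lemma one_add_sq_le_of_abs_sub_le_one {v ℓ : ℝ} (h : |v - ℓ| ≤ 1) :
    1 + v ^ 2 ≤ 3 * (1 + ℓ ^ 2) := by
  have : (v - ℓ) ^ 2 ≤ 1 := by nlinarith [sq_abs (v - ℓ), abs_nonneg (v - ℓ)]
  nlinarith [sq_nonneg (v - 2 * ℓ)]

lemma abs_sq_sub_sq_le {v ℓ δ : ℝ} (h : |v - ℓ| ≤ δ) (hδ : δ ≤ 1) :
    |v ^ 2 - ℓ ^ 2| ≤ 2 * δ * (1 + ℓ ^ 2) := by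
  have hsum : |v + ℓ| ≤ 2 * (1 + ℓ ^ 2) := by
    have := abs_add_le (v - ℓ) (2 * ℓ)
    rw [abs_mul, abs_two, show v - ℓ + 2 * ℓ = v + ℓ by ring] at this
    nlinarith [sq_nonneg (|ℓ| - 1), sq_abs ℓ]
  rw [show v ^ 2 - ℓ ^ 2 = (v - ℓ) * (v + ℓ) by ring, abs_mul]
  calc |v - ℓ| * |v + ℓ| ≤ δ * (2 * (1 + ℓ ^ 2)) := by gcongr; exact (abs_nonneg _).trans h
    _ = 2 * δ * (1 + ℓ ^ 2) := by ring

section Weighted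

variable {φ : ℝ → ℝ} {K : ℝ}

lemma continuous_of_continuous_div_one_add_sq (hφ : Continuous fun v => φ v / (1 + v ^ 2)) :
    Continuous φ := by
  have : φ = fun v => φ v / (1 + v ^ 2) * (1 + v ^ 2) := by
    funext v; field_simp
  rw [this]
  fun_prop

lemma abs_sub_le_of_abs_div_one_add_sq_le (hK : ∀ v, |φ v| / (1 + v ^ 2) ≤ K) (v ℓ : ℝ) :
    |φ v - φ ℓ| ≤ K * (3 * (1 + ℓ ^ 2) + 2 * (v - ℓ) ^ 2) := by
  have hbound : ∀ v, |φ v| ≤ K * (1 + v ^ 2) := fun v => (div_le_iff₀ (by positivity)).1 (hK v)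
  have hK0 : 0 ≤ K := (div_nonneg (abs_nonneg _) (by positivity)).trans (hK 0)
  have hv : 1 + v ^ 2 ≤ 2 * (1 + ℓ ^ 2) + 2 * (v - ℓ) ^ 2 := by
    nlinarith [add_sq_le (a := v - ℓ) (b := ℓ)]
  calc |φ v - φ ℓ| ≤ K * (1 + v ^ 2) + K * (1 + ℓ ^ 2) :=
        (abs_sub _ _).trans (add_le_add (hbound v) (hbound ℓ))
    _ ≤ K * (3 * (1 + ℓ ^ 2) + 2 * (v - ℓ) ^ 2) := by nlinarith

lemma abs_sub_le_of_abs_sub_div_one_add_sq_le (hK : ∀ v, |φ v| / (1 + v ^ 2) ≤ K)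
    {v ℓ δ η : ℝ} (hvℓ : |v - ℓ| ≤ δ) (hδ : δ ≤ 1)
    (hη : |φ v / (1 + v ^ 2) - φ ℓ / (1 + ℓ ^ 2)| ≤ η) :
    |φ v - φ ℓ| ≤ (3 * η + 2 * K * δ) * (1 + ℓ ^ 2) := by
  have hℓ : |φ ℓ / (1 + ℓ ^ 2)| ≤ K := by
    rw [abs_div, abs_of_pos (by positivity : (0 : ℝ) < 1 + ℓ ^ 2)]; exact hK ℓ
  have hsplit : φ v - φ ℓ = (φ v / (1 + v ^ 2) - φ ℓ / (1 + ℓ ^ 2)) * (1 + v ^ 2)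
      + φ ℓ / (1 + ℓ ^ 2) * (v ^ 2 - ℓ ^ 2) := by field_simp; ring
  have hη0 : 0 ≤ η := (abs_nonneg _).trans hη
  have hK0 : 0 ≤ K := (abs_nonneg _).trans hℓ
  rw [hsplit]
  calc _ ≤ η * (3 * (1 + ℓ ^ 2)) + K * (2 * δ * (1 + ℓ ^ 2)) := by
        refine (abs_add_le _ _).trans (add_le_add ?_ ?_) <;> rw [abs_mul]
        · rw [abs_of_pos (by positivity : (0 : ℝ) < 1 + v ^ 2)]
          exact mul_le_mul hη (one_add_sq_le_of_abs_sub_le_one (hvℓ.trans hδ)) (by positivity) hη0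
        · exact mul_le_mul hℓ (abs_sq_sub_sq_le hvℓ hδ) (abs_nonneg _) hK0
    _ = (3 * η + 2 * K * δ) * (1 + ℓ ^ 2) := by ring

lemma exists_abs_sub_le_of_uniformContinuous_div_one_add_sq
    (huc : UniformContinuous fun v => φ v / (1 + v ^ 2)) (hK : ∀ v, |φ v| / (1 + v ^ 2) ≤ K)
    {ε : ℝ} (hε : 0 < ε) :
    ∃ C, 0 ≤ C ∧ ∀ v ℓ, |φ v - φ ℓ| ≤ (ε + C * (v - ℓ) ^ 2) * (1 + ℓ ^ 2) := by
  have hK0 : 0 ≤ K := (div_nonneg (abs_nonneg _) (by positivity)).trans (hK 0)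
  obtain ⟨δ₀, hδ₀, hclose⟩ := Metric.uniformContinuous_iff.1 huc (ε / 6) (by positivity)
  set δ := min (δ₀ / 2) (min 1 (ε / (4 * (K + 1))))
  have hδ : 0 < δ := by positivity
  have hδ1 : δ ≤ 1 := (min_le_right _ _).trans (min_le_left _ _)
  have hδK : 2 * K * δ ≤ ε / 2 := by
    have : δ ≤ ε / (4 * (K + 1)) := (min_le_right _ _).trans (min_le_right _ _)
    rw [le_div_iff₀ (by positivity)] at this
    nlinarith
  refine ⟨K * (3 / δ ^ 2 + 2), by positivity, fun v ℓ => ?_⟩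
  have hW : 1 ≤ 1 + ℓ ^ 2 := by nlinarith [sq_nonneg ℓ]
  by_cases hvℓ : |v - ℓ| ≤ δ
  · have hη := (hclose (a := v) (b := ℓ) (by
      rw [Real.dist_eq]; exact hvℓ.trans_lt ((min_le_left _ _).trans_lt (by linarith)))).le
    rw [Real.dist_eq] at hη
    calc |φ v - φ ℓ| ≤ (3 * (ε / 6) + 2 * K * δ) * (1 + ℓ ^ 2) :=
          abs_sub_le_of_abs_sub_div_one_add_sq_le hK hvℓ hδ1 hη
      _ ≤ (ε + K * (3 / δ ^ 2 + 2) * (v - ℓ) ^ 2) * (1 + ℓ ^ 2) := by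
        have : 0 ≤ K * (3 / δ ^ 2 + 2) * (v - ℓ) ^ 2 := by positivity
        exact mul_le_mul_of_nonneg_right (by linarith) (by positivity)
  · have hfar : δ ^ 2 ≤ (v - ℓ) ^ 2 := by
      rw [← sq_abs (v - ℓ)]; exact pow_le_pow_left₀ hδ.le (not_le.1 hvℓ).le 2
    calc |φ v - φ ℓ| ≤ K * (3 * (1 + ℓ ^ 2) + 2 * (v - ℓ) ^ 2) :=
          abs_sub_le_of_abs_div_one_add_sq_le hK v ℓ
      _ ≤ K * (3 / δ ^ 2 + 2) * (v - ℓ) ^ 2 * (1 + ℓ ^ 2) := by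
        have h3 : 3 * (1 + ℓ ^ 2) ≤ 3 / δ ^ 2 * (v - ℓ) ^ 2 * (1 + ℓ ^ 2) := by
          rw [div_mul_eq_mul_div, div_mul_eq_mul_div, le_div_iff₀ (by positivity)]
          nlinarith
        have h2 : 2 * (v - ℓ) ^ 2 ≤ 2 * (v - ℓ) ^ 2 * (1 + ℓ ^ 2) := by
          nlinarith [sq_nonneg (v - ℓ)]
        have := mul_le_mul_of_nonneg_left (add_le_add h3 h2) hK0
        linarith
      _ ≤ (ε + K * (3 / δ ^ 2 + 2) * (v - ℓ) ^ 2) * (1 + ℓ ^ 2) := by gcongr; linarith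

end Weighted

lemma LogUC.uniformContinuous_comp_exp {g : ℝ → ℝ} (hg : LogUC g) :
    UniformContinuous fun v => g (Real.exp v) := by
  refine Metric.uniformContinuous_iff.2 fun ε hε => ?_
  obtain ⟨δ, hδ, hg⟩ := hg ε hε
  refine ⟨δ, hδ, fun {a b} hab => ?_⟩
  rw [Real.dist_eq] at hab ⊢
  exact hg _ (Real.exp_pos a) _ (Real.exp_pos b) (by rw [Real.log_exp, Real.log_exp]; exact hab.le)

lemma MemVw.uniformContinuous_comp_exp {h : ℝ → ℝ} (hmem : MemVw h) :
    UniformContinuous fun v => h (Real.exp v) / (1 + v ^ 2) := by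
  simpa only [Real.log_exp] using hmem.1.uniformContinuous_comp_exp

lemma MemVw.exists_bound_comp_exp {h : ℝ → ℝ} (hmem : MemVw h) :
    ∃ K, ∀ v, |h (Real.exp v)| / (1 + v ^ 2) ≤ K := by
  obtain ⟨K, hK⟩ := hmem.2
  exact ⟨K, fun v => by simpa only [Real.log_exp] using hK _ (Real.exp_pos v)⟩

lemma exists_int_exp_neg_mul_mem_Icc {s : ℝ} (hs : 0 < s) :
    ∃ j : ℤ, Real.exp (-(j : ℝ)) * s ∈ Set.Icc 1 (Real.exp 1) := by
  refine ⟨⌊Real.log s⌋, ?_⟩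
  rw [← Real.exp_log hs, ← Real.exp_add, Real.log_exp]
  exact ⟨Real.one_le_exp (by linarith [Int.floor_le (Real.log s)]),
    Real.exp_le_exp.2 (by linarith [Int.lt_floor_add_one (Real.log s)])⟩

section Kernel

variable {κ : ℝ → ℝ} {B M2 : ℝ} {φ : ℝ → ℝ} {ε C m z : ℝ}

/-- The second moment of the kernel absorbs the quadratic part of the modulus of continuity, at
the price of a factor `m⁻²`. -/
lemma abs_kernel_mul_average_sub_le (hκb : ∀ x : ℝ, 0 < x → |κ x| ≤ B)
    (hm2 : ∀ s : ℝ, 0 < s → ∀ j : ℤ,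
      |κ (Real.exp (-(j : ℝ)) * s)| * |(j : ℝ) - Real.log s| ^ 2 ≤ M2)
    (hφ : Continuous φ) (hε : 0 ≤ ε) (hC0 : 0 ≤ C)
    (hC : ∀ v ℓ, |φ v - φ ℓ| ≤ (ε + C * (v - ℓ) ^ 2) * (1 + ℓ ^ 2))
    (hm : 0 < m) (hz : 0 < z) (j : ℤ) :
    |κ (Real.exp (-(j : ℝ)) * z ^ m)| *
        |m * (∫ v in (j : ℝ) / m..((j : ℝ) + 1) / m, φ v) - φ (Real.log z)|
      ≤ (B * ε + 2 * C * (B + M2) / m ^ 2) * (1 + Real.log z ^ 2) := by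
  set ℓ := Real.log z
  set k := |κ (Real.exp (-(j : ℝ)) * z ^ m)|
  have hzm : 0 < z ^ m := Real.rpow_pos_of_pos hz m
  have hkB : k ≤ B := hκb _ (by positivity)
  have hkM2 : k * ((j : ℝ) - m * ℓ) ^ 2 ≤ M2 := by
    simpa only [Real.log_rpow hz, sq_abs] using hm2 _ hzm j
  have hlen : ((j : ℝ) + 1) / m - (j : ℝ) / m = m⁻¹ := by field_simp; ring
  have hS : ∀ v ∈ Set.Ioc ((j : ℝ) / m) (((j : ℝ) + 1) / m), |φ v - φ ℓ|
      ≤ (ε + C * (2 / m ^ 2 + 2 * ((j : ℝ) - m * ℓ) ^ 2 / m ^ 2)) * (1 + ℓ ^ 2) := by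
    intro v hv
    refine (hC v ℓ).trans (mul_le_mul_of_nonneg_right (add_le_add_right ?_ _) (by positivity))
    refine mul_le_mul_of_nonneg_left ?_ hC0
    have hvj : (v - (j : ℝ) / m) ^ 2 ≤ 1 / m ^ 2 := by
      rw [one_div, ← inv_pow]
      exact pow_le_pow_left₀ (by linarith [hv.1]) (by linarith [hv.2, hlen]) 2
    have hjℓ : ((j : ℝ) / m - ℓ) ^ 2 = ((j : ℝ) - m * ℓ) ^ 2 / m ^ 2 := by field_simp
    calc (v - ℓ) ^ 2 ≤ 2 * ((v - (j : ℝ) / m) ^ 2 + ((j : ℝ) / m - ℓ) ^ 2) := by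
          simpa using add_sq_le (a := v - (j : ℝ) / m) (b := (j : ℝ) / m - ℓ)
      _ ≤ 2 / m ^ 2 + 2 * ((j : ℝ) - m * ℓ) ^ 2 / m ^ 2 := by
          rw [hjℓ, mul_div_assoc, div_eq_mul_one_div 2]; linarith
  have havg := abs_inv_mul_integral_sub_le
    (div_lt_div_of_pos_right (lt_add_one (j : ℝ)) hm) (hφ.intervalIntegrable _ _) hS
  rw [hlen, inv_inv] at havg
  calc k * |m * (∫ v in (j : ℝ) / m..((j : ℝ) + 1) / m, φ v) - φ ℓ|
      ≤ k * ((ε + C * (2 / m ^ 2 + 2 * ((j : ℝ) - m * ℓ) ^ 2 / m ^ 2)) * (1 + ℓ ^ 2)) :=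
        mul_le_mul_of_nonneg_left havg (abs_nonneg _)
    _ = (k * ε + 2 * C * (k + k * ((j : ℝ) - m * ℓ) ^ 2) / m ^ 2) * (1 + ℓ ^ 2) := by ring
    _ ≤ (B * ε + 2 * C * (B + M2) / m ^ 2) * (1 + ℓ ^ 2) := by gcongr

lemma abs_MopZ_sub_le {h : ℝ → ℝ} {ζ : ℝ} (hκb : ∀ x : ℝ, 0 < x → |κ x| ≤ B)
    (hm2 : ∀ s : ℝ, 0 < s → ∀ j : ℤ,
      |κ (Real.exp (-(j : ℝ)) * s)| * |(j : ℝ) - Real.log s| ^ 2 ≤ M2)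
    (hζ : 0 < ζ) (hinf : ∀ u ∈ Set.Icc (1 : ℝ) (Real.exp 1), ζ ≤ κ u)
    (hh : Continuous fun v => h (Real.exp v)) (hε : 0 ≤ ε) (hC0 : 0 ≤ C)
    (hC : ∀ v ℓ, |h (Real.exp v) - h (Real.exp ℓ)| ≤ (ε + C * (v - ℓ) ^ 2) * (1 + ℓ ^ 2))
    (hm : 0 < m) (hz : 0 < z) (hhz : 0 ≤ h z) :
    |MopZ κ m h z - h z|
      ≤ (B * ε + 2 * C * (B + M2) / m ^ 2) / ζ * (1 + Real.log z ^ 2) := by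
  have hzm : 0 < z ^ m := Real.rpow_pos_of_pos hz m
  rw [div_mul_eq_mul_div]
  refine abs_iSup_mul_div_iSup_sub_le ⟨B, ?_⟩ hζ ?_ hhz fun j => ?_
  · rintro _ ⟨j, rfl⟩
    exact (le_abs_self _).trans (hκb _ (by positivity))
  · obtain ⟨j, hj⟩ := exists_int_exp_neg_mul_mem_Icc hzm
    exact ⟨j, hinf _ hj⟩
  · simpa only [Real.exp_log hz] using
      abs_kernel_mul_average_sub_le hκb hm2 hh hε hC0 hC hm hz j

end Kernel

theorem MopZ_weighted_uniform_convergence_general (κ : ℝ → ℝ)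
    (B M2 ζ : ℝ) (hκb : ∀ x : ℝ, 0 < x → |κ x| ≤ B)
    (hm2 : ∀ s : ℝ, 0 < s → ∀ j : ℤ,
      |κ (Real.exp (-(j : ℝ)) * s)| * |(j : ℝ) - Real.log s| ^ 2 ≤ M2)
    (hζ : 0 < ζ) (hinf : ∀ u ∈ Set.Icc (1 : ℝ) (Real.exp 1), ζ ≤ κ u)
    (h : ℝ → ℝ) (hpos : ∀ x : ℝ, 0 < x → 0 ≤ h x)
    (hmem : MemVw h) :
    ∀ ε : ℝ, 0 < ε → ∃ M : ℝ, ∀ m : ℝ, M ≤ m → ∀ z : ℝ, 0 < z →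
      |MopZ κ m h z - h z| / (1 + (Real.log z) ^ 2) < ε := by
  intro ε hε
  have hB : 0 < B := hζ.trans_le <| (hinf 1 ⟨le_rfl, Real.one_le_exp zero_le_one⟩).trans <|
    (le_abs_self _).trans (hκb 1 one_pos)
  have huc := hmem.uniformContinuous_comp_exp
  obtain ⟨K, hK⟩ := hmem.exists_bound_comp_exp
  obtain ⟨C, hC0, hC⟩ := exists_abs_sub_le_of_uniformContinuous_div_one_add_sq huc hK
    (ε := ζ * ε / (2 * B)) (by positivity)
  have hsmall : ∀ᶠ m : ℝ in Filter.atTop, 0 < m ∧ 2 * C * (B + M2) / m ^ 2 < ζ * ε / 2 :=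
    (Filter.eventually_gt_atTop 0).and <| (tendsto_const_nhds.div_atTop
      (Filter.tendsto_pow_atTop two_ne_zero)).eventually (gt_mem_nhds (by positivity))
  obtain ⟨M, hM⟩ := Filter.eventually_atTop.1 hsmall
  refine ⟨M, fun m hm z hz => ?_⟩
  obtain ⟨hm0, hmM⟩ := hM m hm
  have hbound := abs_MopZ_sub_le hκb hm2 hζ hinf
    (continuous_of_continuous_div_one_add_sq huc.continuous) (by positivity) hC0 hC hm0 hz
    (hpos z hz)
  rw [div_lt_iff₀ (by positivity)]
  refine hbound.trans_lt (mul_lt_mul_of_pos_right ?_ (by positivity))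
  have hBε : B * (ζ * ε / (2 * B)) = ζ * ε / 2 := by field_simp
  rw [div_lt_iff₀ hζ, hBε]
  linarith

theorem MopZ_weighted_uniform_convergence (κ : ℝ → ℝ) (hκmeas : Measurable κ)
    (B M2 ζ : ℝ) (hκb : ∀ x : ℝ, 0 < x → |κ x| ≤ B)
    (hm2 : ∀ s : ℝ, 0 < s → ∀ j : ℤ,
      |κ (Real.exp (-(j : ℝ)) * s)| * |(j : ℝ) - Real.log s| ^ 2 ≤ M2)
    (hζ : 0 < ζ) (hinf : ∀ u ∈ Set.Icc (1 : ℝ) (Real.exp 1), ζ ≤ κ u)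
    (h : ℝ → ℝ) (hmeas : Measurable h) (hpos : ∀ x : ℝ, 0 < x → 0 ≤ h x)
    (hmem : MemVw h) :
    ∀ ε : ℝ, 0 < ε → ∃ M : ℝ, ∀ m : ℝ, M ≤ m → ∀ z : ℝ, 0 < z →
      |MopZ κ m h z - h z| / (1 + (Real.log z) ^ 2) < ε :=
  MopZ_weighted_uniform_convergence_general κ B M2 ζ hκb hm2 hζ hinf h hpos hmem
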